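/- Let X be a complete decomposition space and n ≥ 0. Writing 1a^n for the word of length n+1 with first letter 1 and remaining letters a, the subset X_{1a^n} ⊆ X_{n+1} is the disjoint union of s_0(→X_n) and →X_{n+1}; the map s_0 : →X_n → X_{0a^n} is a bijection; and for τ ∈ →X_n the long edge of s_0(τ) equals the long edge of τ. Symmetrically, X_{a^n1} is the disjoint union of s_n(→X_n) and →X_{n+1}, with s_n : →X_n → X_{a^n0} a bijection preserving long edges. (This realises the convolution identities ζ * Φ_n = Φ_n + Φ_{n+1} = Φ_n * ζ at the objective level.) -/

import Mathlib

open CategoryTheory CategoryTheory.Limits Opposite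

notation "⦋" n "⦌" => SimplexCategory.mk n

notation:1000 X " _⦋" n "⦌" => Prefunctor.obj (CategoryTheory.Functor.toPrefunctor X) (Opposite.op (SimplexCategory.mk n))

/-- A map in the simplex category is *generic* if it preserves the endpoints. -/
def IsGeneric {a b : SimplexCategory} (g : a ⟶ b) : Prop :=
  g.toOrderHom 0 = 0 ∧ g.toOrderHom (Fin.last a.len) = Fin.last b.len

/-- A map in the simplex category is *free* if it is distance preserving. -/
def IsFree {a b : SimplexCategory} (f : a ⟶ b) : Prop :=
  ∀ i : Fin (a.len + 1), (f.toOrderHom i : ℕ) = (f.toOrderHom 0 : ℕ) + (i : ℕ)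

/-- A decomposition space is a simplicial set carrying every pushout in `Δ` of a
generic map `g` along a free map `f` to a pullback of sets. -/
def IsDecomposition (X : SSet) : Prop :=
  ∀ ⦃a b c d : SimplexCategory⦄ (g : a ⟶ b) (f : a ⟶ c) (h : b ⟶ d) (k : c ⟶ d),
    IsGeneric g → IsFree f → IsPushout g f h k →
    IsPullback (X.map h.op) (X.map k.op) (X.map g.op) (X.map f.op)

/-- A simplicial set is *complete* if all degeneracy maps are injective. -/
def Complete (X : SSet) : Prop :=
  ∀ (n : ℕ) (i : Fin (n + 1)), Function.Injective (X.σ i : X _⦋n⦌ ⟶ X _⦋n + 1⦌)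

/-- The free map `[1] → [n]` sending `0, 1` to `i, i+1`; it induces the map
taking the `i`-th principal edge (`0`-indexed) of an `n`-simplex. -/
def principalEdge (n : ℕ) (i : Fin n) : (⦋1⦌ : SimplexCategory) ⟶ ⦋n⦌ :=
  SimplexCategory.mkHom
    { toFun := fun j => ⟨i.1 + j.1, by have := i.2; have := j.2; omega⟩
      monotone' := fun a b h => by
        simp only [Fin.mk_le_mk]
        exact Nat.add_le_add_left h i.1 }

/-- The unique generic map `[1] → [n]` (`0 ↦ 0`, `1 ↦ n`); it induces the map
taking the long edge of an `n`-simplex. -/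
def longEdgeMap (n : ℕ) : (⦋1⦌ : SimplexCategory) ⟶ ⦋n⦌ :=
  SimplexCategory.mkHom
    { toFun := fun j => ⟨j.1 * n, by
        have h := j.2
        have : j.1 * n ≤ 1 * n := Nat.mul_le_mul_right n (by omega)
        omega⟩
      monotone' := fun a b h => by
        simp only [Fin.mk_le_mk]
        exact Nat.mul_le_mul_right n h }

/-- The alphabet `{0, 1, a}`: `z` prescribes a degenerate principal edge, `o` an
unrestricted one, `a` a nondegenerate one. -/
inductive Letter where
  | z : Letter
  | o : Letter
  | a : Letter
  deriving DecidableEq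

/-- The subset of `X₁` prescribed by a letter. -/
def edgeSet (X : SSet) : Letter → Set (X _⦋1⦌)
  | .z => Set.range (X.σ (0 : Fin 1))
  | .o => Set.univ
  | .a => (Set.range (X.σ (0 : Fin 1)))ᶜ

/-- `X_w`, the set of `n`-simplices whose principal edges have the types
prescribed by the word `w`. -/
def wordSet (X : SSet) {n : ℕ} (w : Fin n → Letter) : Set (X _⦋n⦌) :=
  {σ | ∀ i : Fin n, X.map (principalEdge n i).op σ ∈ edgeSet X (w i)}

/-- A simplex is *effective* if all its principal edges are nondegenerate. -/
def Effective (X : SSet) {n : ℕ} (σ : X _⦋n⦌) : Prop :=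
  ∀ i : Fin n, X.map (principalEdge n i).op σ ∉ Set.range (X.σ (0 : Fin 1))

/-- The constant word `aa⋯a`. -/
def allA (n : ℕ) : Fin n → Letter := fun _ => Letter.a

/-- Concatenation of words. -/
def concatW {m n : ℕ} (v : Fin m → Letter) (v' : Fin n → Letter) : Fin (m + n) → Letter :=
  fun i => if h : i.1 < m then v ⟨i.1, h⟩ else v' ⟨i.1 - m, by have := i.2; omega⟩

/-- The word `v ℓ v'` obtained by splicing a letter `ℓ` between the words `v` and `v'`. -/
def splice {m n : ℕ} (v : Fin m → Letter) (l : Letter) (v' : Fin n → Letter) :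
    Fin (m + n + 1) → Letter :=
  fun i => if h : i.1 < m then v ⟨i.1, h⟩
    else if h2 : i.1 = m then l
    else v' ⟨i.1 - (m + 1), by have := i.2; omega⟩

/-- A simplex (of positive dimension) is degenerate if it is in the image of some
degeneracy map. -/
def Degen (X : SSet) {n : ℕ} (σ : X _⦋n + 1⦌) : Prop :=
  ∃ i : Fin (n + 1), σ ∈ Set.range (X.σ i)

/-- A simplicial map is *cULF* if its naturality squares on all generic maps are
pullbacks. -/
def IsCULF {Y X : SSet} (f : Y ⟶ X) : Prop :=
  ∀ ⦃a b : SimplexCategory⦄ (g : a ⟶ b), IsGeneric g →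
    IsPullback (f.app (op b)) (Y.map g.op) (X.map g.op) (f.app (op a))

/-- A simplicial map is *conservative* if its naturality squares on all degeneracy
maps are pullbacks. -/
def Conservative {Y X : SSet} (f : Y ⟶ X) : Prop :=
  ∀ (n : ℕ) (i : Fin (n + 1)),
    IsPullback (f.app (op (SimplexCategory.mk n))) (Y.σ i) (X.σ i)
      (f.app (op (SimplexCategory.mk (n + 1))))

/-- A simplicial set is *stiff* if it carries every pushout in `Δ` of a codegeneracy
map along a free map to a pullback of sets. -/
def Stiff (X : SSet) : Prop :=
  ∀ (k : ℕ) (i : Fin (k + 1)) ⦃c d : SimplexCategory⦄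
    (f : SimplexCategory.mk (k + 1) ⟶ c) (h : SimplexCategory.mk k ⟶ d) (j : c ⟶ d),
    IsFree f → IsPushout (SimplexCategory.σ i) f h j →
    IsPullback (X.map h.op) (X.map j.op) (X.map (SimplexCategory.σ i).op) (X.map f.op)

/-- The map `[0] → [n]` picking out the vertex `i`. -/
def vertexMap (n : ℕ) (i : Fin (n + 1)) : (⦋0⦌ : SimplexCategory) ⟶ ⦋n⦌ :=
  SimplexCategory.mkHom ⟨fun _ => i, fun _ _ _ => le_refl _⟩

/-- The unique map `[n] → [0]`; it induces the iterated degeneracy `X₀ → Xₙ`. -/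
def toZero (n : ℕ) : (⦋n⦌ : SimplexCategory) ⟶ ⦋0⦌ :=
  SimplexCategory.mkHom ⟨fun _ => 0, fun _ _ _ => le_refl _⟩

/-- The generic map `[2] → [m+n]` sending `0,1,2` to `0,m,m+n`. -/
def midMap (m n : ℕ) : (⦋2⦌ : SimplexCategory) ⟶ ⦋m + n⦌ :=
  SimplexCategory.mkHom
    { toFun := fun j => ⟨if j.1 = 0 then 0 else if j.1 = 1 then m else m + n, by
        split
        · omega
        · split <;> omega⟩
      monotone' := by
        intro a b hab
        have h : a.1 ≤ b.1 := hab
        have ha := a.2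
        have hb := b.2
        simp only [Fin.mk_le_mk]
        split <;> split <;> (try split) <;> (try split) <;> omega }

/-- The free map `[m] → [m+n]` onto the initial segment. -/
def freeInitial (m n : ℕ) : (⦋m⦌ : SimplexCategory) ⟶ ⦋m + n⦌ :=
  SimplexCategory.mkHom ⟨fun i => ⟨i.1, by have := i.2; omega⟩, fun a b h => h⟩

/-- The free map `[n] → [m+n]` onto the final segment. -/
def freeFinal (m n : ℕ) : (⦋n⦌ : SimplexCategory) ⟶ ⦋m + n⦌ :=
  SimplexCategory.mkHom ⟨fun i => ⟨m + i.1, by have := i.2; omega⟩,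
    fun a b h => by
      simp only [Fin.mk_le_mk]
      exact Nat.add_le_add_left h m⟩

/-- The word `1aa⋯a` (`n` letters `a`). -/
def oneA (n : ℕ) : Fin (n + 1) → Letter := fun i => if i.1 = 0 then Letter.o else Letter.a

/-- The word `0aa⋯a` (`n` letters `a`). -/
def zeroA (n : ℕ) : Fin (n + 1) → Letter := fun i => if i.1 = 0 then Letter.z else Letter.a

/-- The word `aa⋯a1` (`n` letters `a`). -/
def aOne (n : ℕ) : Fin (n + 1) → Letter := fun i => if i.1 = n then Letter.o else Letter.a

/-- The word `aa⋯a0` (`n` letters `a`). -/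
def aZero (n : ℕ) : Fin (n + 1) → Letter := fun i => if i.1 = n then Letter.z else Letter.a

/-- The number of letters `0` in a word. -/
def zcount {n : ℕ} (w : Fin n → Letter) : ℕ :=
  (Finset.univ.filter fun i => w i = Letter.z).card

/-- The surjection `[n] → [n - zcount w]` collapsing, for each position `j` with
`w j = 0`, the vertex `j+1` onto the vertex `j`; the induced map
`X_{n - zcount w} → X_n` is the iterated degeneracy `s_{j_k} ⋯ s_{j_1}` where
`j_1 < ⋯ < j_k` are the positions of the letters `0` of `w`. -/
def collapseMap {n : ℕ} (w : Fin n → Letter) :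
    (⦋n⦌ : SimplexCategory) ⟶ ⦋n - zcount w⦌ :=
  SimplexCategory.mkHom
    { toFun := fun t =>
        ⟨(Finset.univ.filter fun i : Fin n => i.1 < t.1 ∧ ¬ (w i = Letter.z)).card, by
          have h2 := Finset.card_filter_add_card_filter_not
            (s := (Finset.univ : Finset (Fin n))) (p := fun i => w i = Letter.z)
          have h1 : (Finset.univ.filter fun i : Fin n => i.1 < t.1 ∧ ¬ (w i = Letter.z)).card
              ≤ (Finset.univ.filter fun i : Fin n => ¬ (w i = Letter.z)).card :=
            Finset.card_le_card (fun x hx => by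
              simp only [Finset.mem_filter] at hx ⊢
              exact ⟨hx.1, hx.2.2⟩)
          have h3 : zcount w = (Finset.univ.filter fun i : Fin n => w i = Letter.z).card := rfl
          simp only [Finset.card_univ, Fintype.card_fin] at h2
          omega⟩
      monotone' := by
        intro a b hab
        have h : a.1 ≤ b.1 := hab
        simp only [Fin.mk_le_mk]
        exact Finset.card_le_card (fun x hx => by
          simp only [Finset.mem_filter] at hx ⊢
          exact ⟨hx.1, lt_of_lt_of_le hx.2.1 h, hx.2.2⟩) }

/-- An edge has finite length if there is a bound on the dimensions of the effective
simplices having it as long edge. -/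
def FiniteLength (X : SSet) (a : X _⦋1⦌) : Prop :=
  ∃ N : ℕ, ∀ (n : ℕ) (σ : X _⦋n⦌), Effective X σ →
    X.map (longEdgeMap n).op σ = a → n ≤ N

/-- A *tight* decomposition space: a complete decomposition space in which every edge
has finite length. -/
def Tight (X : SSet) : Prop :=
  IsDecomposition X ∧ Function.Injective (X.σ (0 : Fin 1) : X _⦋0⦌ ⟶ X _⦋1⦌) ∧
    ∀ a : X _⦋1⦌, FiniteLength X a

/-- The length of an edge: the supremum of the dimensions of effective simplices
having it as long edge. -/
noncomputable def edgeLength (X : SSet) (a : X _⦋1⦌) : ℕ :=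
  sSup {n : ℕ | ∃ σ : X _⦋n⦌, Effective X σ ∧ X.map (longEdgeMap n).op σ = a}

/-- A complete simplicial set is *split* if all face maps preserve nondegenerate
simplices. -/
def Split (X : SSet) : Prop :=
  Complete X ∧ ∀ (n : ℕ) (i : Fin (n + 3)) (σ : X _⦋n + 2⦌),
    ¬ Degen X σ → ¬ Degen X (X.δ i σ)

/-- The counit: the indicator function of the degenerate edges. -/
noncomputable def epsFun (X : SSet) : X _⦋1⦌ → ℚ := fun f =>
  haveI := Classical.propDecidable (f ∈ Set.range (X.σ (0 : Fin 1)))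
  if f ∈ Set.range (X.σ (0 : Fin 1)) then 1 else 0

/-- Convolution product on `ℚ`-valued functions on `X₁`. -/
noncomputable def convFun (X : SSet) (φ ψ : X _⦋1⦌ → ℚ) : X _⦋1⦌ → ℚ :=
  fun f => ∑ᶠ σ ∈ (fun τ => X.δ (1 : Fin 3) τ) ⁻¹' {f},
    φ (X.δ (2 : Fin 3) σ) * ψ (X.δ (0 : Fin 3) σ)

/-- The Möbius function `Φ_even - Φ_odd`. -/
noncomputable def muFun (X : SSet) : X _⦋1⦌ → ℚ :=
  fun f => ∑ᶠ n : ℕ, (-1 : ℚ) ^ n *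
    (Nat.card {σ : X.obj (op (SimplexCategory.mk n)) // Effective X σ ∧ X.map (longEdgeMap n).op σ = f} : ℚ)

/-- The category `Δ_inj`: objects those of the simplex category, morphisms the
injective monotone maps. -/
structure DeltaInj : Type where
  /-- the underlying object of the simplex category -/
  obj : SimplexCategory

instance : Category DeltaInj where
  Hom a b := {f : a.obj ⟶ b.obj // Function.Injective f.toOrderHom}
  id a := ⟨𝟙 a.obj, by
    rw [SimplexCategory.id_toOrderHom]
    exact fun x y h => h⟩
  comp f g := ⟨f.1 ≫ g.1, by
    rw [SimplexCategory.comp_toOrderHom]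
    exact fun x y h => f.2 (g.2 h)⟩
  id_comp f := by apply Subtype.ext; simp
  comp_id f := by apply Subtype.ext; simp
  assoc f g h := by apply Subtype.ext; simp

/-- The inclusion functor `Δ_inj ⊆ Δ`. -/
def DeltaInj.incl : DeltaInj ⥤ SimplexCategory where
  obj a := a.obj
  map f := f.1

/-- A *semi-decomposition space*: a semi-simplicial set carrying every pushout in
`Δ_inj` of a generic (inner) face map along a free (outer) face map to a pullback. -/
def IsSemiDecomposition (Z : DeltaInjᵒᵖ ⥤ Type) : Prop :=
  ∀ ⦃a b c d : DeltaInj⦄ (g : a ⟶ b) (f : a ⟶ c) (h : b ⟶ d) (k : c ⟶ d),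
    IsGeneric g.1 → IsFree f.1 → IsPushout g f h k →
    IsPullback (Z.map h.op) (Z.map k.op) (Z.map g.op) (Z.map f.op)

/-- A map of semi-simplicial sets is *ULF* if its naturality squares on all generic
face maps are pullbacks. -/
def IsULF {Z W : DeltaInjᵒᵖ ⥤ Type} (φ : Z ⟶ W) : Prop :=
  ∀ ⦃a b : DeltaInj⦄ (g : a ⟶ b), IsGeneric g.1 →
    IsPullback (φ.app (op b)) (Z.map g.op) (W.map g.op) (φ.app (op a))

lemma conservative_id (X : SSet) : Conservative (𝟙 X) := by
  intro n i
  exact IsPullback.of_horiz_isIso ⟨by simp⟩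

lemma conservative_comp {X Y Z : SSet} {f : X ⟶ Y} {g : Y ⟶ Z}
    (hf : Conservative f) (hg : Conservative g) : Conservative (f ≫ g) := by
  intro n i
  simpa using IsPullback.paste_horiz (hf n i) (hg n i)

lemma isCULF_id (X : SSet) : IsCULF (𝟙 X) := by
  intro a b gm hgm
  exact IsPullback.of_horiz_isIso ⟨by simp⟩

lemma isCULF_comp {X Y Z : SSet} {f : X ⟶ Y} {g : Y ⟶ Z}
    (hf : IsCULF f) (hg : IsCULF g) : IsCULF (f ≫ g) := by
  intro a b gm hgm
  simpa using IsPullback.paste_horiz (hf gm hgm) (hg gm hgm)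

lemma isULF_id (Z : DeltaInjᵒᵖ ⥤ Type) : IsULF (𝟙 Z) := by
  intro a b gm hgm
  exact IsPullback.of_horiz_isIso ⟨by simp⟩

lemma isULF_comp {X Y Z : DeltaInjᵒᵖ ⥤ Type} {f : X ⟶ Y} {g : Y ⟶ Z}
    (hf : IsULF f) (hg : IsULF g) : IsULF (f ≫ g) := by
  intro a b gm hgm
  simpa using IsPullback.paste_horiz (hf gm hgm) (hg gm hgm)

/-- The category of split simplicial sets and conservative maps. -/
structure SplitSSet : Type 1 where
  /-- the underlying simplicial set -/
  X : SSet.{0}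
  split : Split X

instance : Category SplitSSet where
  Hom A B := {f : A.X ⟶ B.X // Conservative f}
  id A := ⟨𝟙 A.X, conservative_id A.X⟩
  comp f g := ⟨f.1 ≫ g.1, conservative_comp f.2 g.2⟩
  id_comp f := by apply Subtype.ext; simp
  comp_id f := by apply Subtype.ext; simp
  assoc f g h := by apply Subtype.ext; simp

/-- The forgetful functor from split simplicial sets to simplicial sets. -/
def SplitSSet.forget : SplitSSet ⥤ SSet where
  obj A := A.X
  map f := f.1

/-- The category of split decomposition spaces and cULF maps. -/
structure SplitDecomp : Type 1 where
  /-- the underlying simplicial set -/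
  X : SSet.{0}
  split : Split X
  decomp : IsDecomposition X

instance : Category SplitDecomp where
  Hom A B := {f : A.X ⟶ B.X // IsCULF f}
  id A := ⟨𝟙 A.X, isCULF_id A.X⟩
  comp f g := ⟨f.1 ≫ g.1, isCULF_comp f.2 g.2⟩
  id_comp f := by apply Subtype.ext; simp
  comp_id f := by apply Subtype.ext; simp
  assoc f g h := by apply Subtype.ext; simp

/-- The forgetful functor from split decomposition spaces to simplicial sets. -/
def SplitDecomp.forget : SplitDecomp ⥤ SSet where
  obj A := A.X
  map f := f.1

/-- The category of semi-decomposition spaces and ULF maps. -/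
structure SemiDecomp : Type 1 where
  /-- the underlying semi-simplicial set -/
  Z : DeltaInjᵒᵖ ⥤ Type
  semidecomp : IsSemiDecomposition Z

instance : Category SemiDecomp where
  Hom A B := {φ : A.Z ⟶ B.Z // IsULF φ}
  id A := ⟨𝟙 A.Z, isULF_id A.Z⟩
  comp f g := ⟨f.1 ≫ g.1, isULF_comp f.2 g.2⟩
  id_comp f := by apply Subtype.ext; simp
  comp_id f := by apply Subtype.ext; simp
  assoc f g h := by apply Subtype.ext; simp

/-- The forgetful functor from semi-decomposition spaces to semi-simplicial sets. -/
def SemiDecomp.forget : SemiDecomp ⥤ (DeltaInjᵒᵖ ⥤ Type) where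
  obj A := A.Z
  map f := f.1

/-!
In `Δ` the square with `σ₀ : [1] → [0]`, the `i`-th principal edge `[1] → [n+1]` and
`σᵢ : [n+1] → [n]` is a pushout of a generic map along a free one. Hence in a decomposition
space `sᵢ` identifies `Xₙ` with the `(n+1)`-simplices whose `i`-th principal edge is degenerate.
The other principal edges of `sᵢ τ` are those of `τ`, and its long edge is that of `τ`, so
splitting `X_{a⋯1⋯a}` according to whether the `i`-th edge is degenerate gives the claim
for `i = 0` and `i = n`.
-/

lemma longEdgeMap_apply_zero (n : ℕ) : (longEdgeMap n).toOrderHom 0 = 0 :=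
  Fin.ext (zero_mul n)

lemma longEdgeMap_apply_one (n : ℕ) : (longEdgeMap n).toOrderHom 1 = Fin.last n :=
  Fin.ext (one_mul n)

lemma isGeneric_σ_zero : IsGeneric (SimplexCategory.σ (0 : Fin 1)) :=
  ⟨Subsingleton.elim (α := Fin 1) _ _, Subsingleton.elim (α := Fin 1) _ _⟩

lemma isFree_principalEdge (n : ℕ) (i : Fin n) : IsFree (principalEdge n i) := fun _ => rfl

lemma σ_zero_comp_vertexMap (n : ℕ) (i : Fin (n + 1)) :
    SimplexCategory.σ (0 : Fin 1) ≫ vertexMap n i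
      = principalEdge (n + 1) i ≫ SimplexCategory.σ i :=
  SimplexCategory.Hom.ext_one_left _ _ (Fin.predAbove_castSucc_self i).symm
    (Fin.predAbove_succ_self i).symm

lemma principalEdge_succAbove_comp_σ (n : ℕ) (i : Fin (n + 1)) (j : Fin n) :
    principalEdge (n + 1) (i.succAbove j) ≫ SimplexCategory.σ i = principalEdge n j := by
  rcases lt_or_ge j.castSucc i with h | h
  · rw [Fin.succAbove_of_castSucc_lt _ _ h]
    apply SimplexCategory.Hom.ext_one_left
    · exact Fin.predAbove_castSucc_of_le _ _ h.le
    · show i.predAbove j.castSucc.succ = j.succ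
      rw [Fin.succ_castSucc]
      exact Fin.predAbove_castSucc_of_le _ _ (Fin.castSucc_lt_iff_succ_le.mp h)
  · rw [Fin.succAbove_of_le_castSucc _ _ h]
    apply SimplexCategory.Hom.ext_one_left
    · show i.predAbove j.succ.castSucc = j.castSucc
      rw [← Fin.succ_castSucc]
      exact Fin.predAbove_succ_of_le _ _ h
    · exact Fin.predAbove_succ_of_le _ _ (h.trans (Fin.castSucc_le_succ j))

lemma longEdgeMap_comp_σ (n : ℕ) (i : Fin (n + 1)) :
    longEdgeMap (n + 1) ≫ SimplexCategory.σ i = longEdgeMap n := by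
  apply SimplexCategory.Hom.ext_one_left
  · show i.predAbove ((longEdgeMap (n + 1)).toOrderHom 0) = (longEdgeMap n).toOrderHom 0
    rw [longEdgeMap_apply_zero, longEdgeMap_apply_zero, Fin.predAbove_right_zero]
  · show i.predAbove ((longEdgeMap (n + 1)).toOrderHom 1) = (longEdgeMap n).toOrderHom 1
    rw [longEdgeMap_apply_one, longEdgeMap_apply_one, Fin.predAbove_right_last]

lemma isPushout_σ_principalEdge (n : ℕ) (i : Fin (n + 1)) :
    IsPushout (SimplexCategory.σ (0 : Fin 1)) (principalEdge (n + 1) i)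
      (vertexMap n i) (SimplexCategory.σ i) := by
  have fac (s : PushoutCocone (SimplexCategory.σ (0 : Fin 1)) (principalEdge (n + 1) i)) :
      SimplexCategory.σ i ≫ SimplexCategory.δ i.succ ≫ s.inr = s.inr := by
    have hi : s.inr.toOrderHom i.castSucc = s.inr.toOrderHom i.succ :=
      calc s.inr.toOrderHom i.castSucc = (principalEdge (n + 1) i ≫ s.inr).toOrderHom 0 := rfl
        _ = (SimplexCategory.σ 0 ≫ s.inl).toOrderHom 0 :=
          SimplexCategory.congr_toOrderHom_apply s.condition.symm 0
        _ = (SimplexCategory.σ 0 ≫ s.inl).toOrderHom 1 :=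
          congr_arg s.inl.toOrderHom (Subsingleton.elim (α := Fin 1) _ _)
        _ = s.inr.toOrderHom i.succ := SimplexCategory.congr_toOrderHom_apply s.condition 1
    obtain ⟨θ, hθ⟩ := SimplexCategory.eq_σ_comp_of_not_injective' s.inr i hi
    rw [hθ, SimplexCategory.δ_comp_σ_succ_assoc]
  -- `δ (i+1)` is a section of `σ i`, so any cocone factors as `σ i ≫ δ (i+1) ≫ s.inr`.
  refine .of_isColimit' ⟨σ_zero_comp_vertexMap n i⟩ <|
    PushoutCocone.IsColimit.mk _ (fun s => SimplexCategory.δ i.succ ≫ s.inr) (fun s => ?_) fac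
      (fun s m _ hm => by rw [← hm, SimplexCategory.δ_comp_σ_succ_assoc])
  rw [← cancel_epi (SimplexCategory.σ 0), s.condition, ← Category.assoc, σ_zero_comp_vertexMap,
    Category.assoc, fac]

section Degeneracies

lemma SSet.map_map_of_comp_eq (X : SSet) {a b c : SimplexCategory} {f : a ⟶ b} {g : b ⟶ c}
    {h : a ⟶ c} (hfg : f ≫ g = h) (x : X.obj (op c)) :
    X.map f.op (X.map g.op x) = X.map h.op x := by
  rw [← hfg, op_comp, X.map_comp]
  rfl

variable (X : SSet) {n : ℕ} (i : Fin (n + 1))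

lemma map_principalEdge_σ (τ : X _⦋n⦌) :
    X.map (principalEdge (n + 1) i).op (X.σ i τ) = X.σ 0 (X.map (vertexMap n i).op τ) :=
  (X.map_map_of_comp_eq (σ_zero_comp_vertexMap n i).symm τ).trans
    (X.map_map_of_comp_eq rfl τ).symm

lemma map_principalEdge_succAbove_σ (τ : X _⦋n⦌) (j : Fin n) :
    X.map (principalEdge (n + 1) (i.succAbove j)).op (X.σ i τ)
      = X.map (principalEdge n j).op τ :=
  X.map_map_of_comp_eq (principalEdge_succAbove_comp_σ n i j) τ

lemma map_longEdgeMap_σ (τ : X _⦋n⦌) :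
    X.map (longEdgeMap (n + 1)).op (X.σ i τ) = X.map (longEdgeMap n).op τ :=
  X.map_map_of_comp_eq (longEdgeMap_comp_σ n i) τ

lemma σ_injective : Function.Injective (X.σ i) :=
  Function.LeftInverse.injective (SSet.δ_comp_σ_succ_apply i)

lemma mem_wordSet_iff_succAbove (w : Fin (n + 1) → Letter) (σ : X _⦋n + 1⦌) :
    σ ∈ wordSet X w ↔ X.map (principalEdge (n + 1) i).op σ ∈ edgeSet X (w i) ∧
      ∀ j, X.map (principalEdge (n + 1) (i.succAbove j)).op σ ∈ edgeSet X (w (i.succAbove j)) :=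
  Fin.forall_iff_succAbove i

lemma σ_mem_wordSet_iff (w : Fin (n + 1) → Letter) (τ : X _⦋n⦌) :
    X.σ i τ ∈ wordSet X w ↔
      X.σ 0 (X.map (vertexMap n i).op τ) ∈ edgeSet X (w i) ∧ τ ∈ wordSet X (w ∘ i.succAbove) := by
  refine (mem_wordSet_iff_succAbove X i w _).trans ?_
  simp only [map_principalEdge_σ, map_principalEdge_succAbove_σ]
  rfl

end Degeneracies

section Words

variable (X : SSet) {n : ℕ} (i : Fin (n + 1))

lemma wordSet_update (w : Fin (n + 1) → Letter) (l : Letter) :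
    wordSet X (Function.update w i l) = wordSet X (Function.update w i .o) ∩
      X.map (principalEdge (n + 1) i).op ⁻¹' edgeSet X l := by
  ext σ
  rw [Set.mem_inter_iff, mem_wordSet_iff_succAbove X i _ σ, mem_wordSet_iff_succAbove X i _ σ]
  simp only [Function.update_self, Function.update_of_ne (Fin.succAbove_ne i _)]
  exact ⟨fun ⟨hl, hw⟩ => ⟨⟨Set.mem_univ _, hw⟩, hl⟩, fun ⟨⟨_, hw⟩, hl⟩ => ⟨hl, hw⟩⟩

lemma update_allA_comp_succAbove (l : Letter) :
    Function.update (allA (n + 1)) i l ∘ i.succAbove = allA n :=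
  funext fun j => Function.update_of_ne (Fin.succAbove_ne i j) _ _

lemma image_σ_wordSet (w : Fin (n + 1) → Letter) (hw : Set.range (X.σ 0) ⊆ edgeSet X (w i)) :
    X.σ i '' wordSet X (w ∘ i.succAbove) = wordSet X w ∩ Set.range (X.σ i) := by
  ext σ
  constructor
  · rintro ⟨τ, hτ, rfl⟩
    exact ⟨(σ_mem_wordSet_iff X i w τ).2 ⟨hw ⟨_, rfl⟩, hτ⟩, τ, rfl⟩
  · rintro ⟨hσ, τ, rfl⟩
    exact ⟨τ, ((σ_mem_wordSet_iff X i w τ).1 hσ).2, rfl⟩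

lemma disjoint_image_σ_wordSet_allA :
    Disjoint (X.σ i '' wordSet X (allA n)) (wordSet X (allA (n + 1))) := by
  refine Set.disjoint_left.2 ?_
  rintro _ ⟨τ, -, rfl⟩ hσ
  exact hσ i ⟨_, (map_principalEdge_σ X i τ).symm⟩

end Words

namespace IsDecomposition

variable {X : SSet} {n : ℕ} (i : Fin (n + 1))

lemma range_σ (hX : IsDecomposition X) :
    Set.range (X.σ i) = X.map (principalEdge (n + 1) i).op ⁻¹' Set.range (X.σ 0) :=
  Types.range_snd_of_isPullback <| hX _ _ _ _ isGeneric_σ_zero (isFree_principalEdge _ _)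
    (isPushout_σ_principalEdge n i)

lemma image_σ_wordSet_allA (hX : IsDecomposition X) :
    X.σ i '' wordSet X (allA n) = wordSet X (Function.update (allA (n + 1)) i .z) := by
  have h := image_σ_wordSet X i (Function.update (allA (n + 1)) i .z)
    (by rw [Function.update_self]; rfl)
  rw [update_allA_comp_succAbove] at h
  refine h.trans (Set.inter_eq_left.2 ?_)
  rw [wordSet_update X i _ .z]
  exact Set.inter_subset_right.trans (hX.range_σ i).superset

lemma wordSet_update_one (hX : IsDecomposition X) :
    wordSet X (Function.update (allA (n + 1)) i .o)
      = X.σ i '' wordSet X (allA n) ∪ wordSet X (allA (n + 1)) := by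
  have ha := wordSet_update X i (allA (n + 1)) .a
  rw [show Function.update (allA (n + 1)) i .a = allA (n + 1) from Function.update_eq_self i _]
    at ha
  refine (Set.inter_union_compl _
    (X.map (principalEdge (n + 1) i).op ⁻¹' Set.range (X.σ 0))).symm.trans ?_
  exact congrArg₂ (· ∪ ·)
    ((wordSet_update X i _ .z).symm.trans (hX.image_σ_wordSet_allA i).symm) ha.symm

lemma bijOn_σ (hX : IsDecomposition X) :
    Set.BijOn (X.σ i) (wordSet X (allA n)) (wordSet X (Function.update (allA (n + 1)) i .z)) :=
  hX.image_σ_wordSet_allA i ▸ (σ_injective X i).injOn.bijOn_image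

end IsDecomposition

lemma oneA_eq_update (n : ℕ) : oneA n = Function.update (allA (n + 1)) 0 .o := by
  funext j
  by_cases h : j = 0 <;> simp [oneA, allA, h]

lemma zeroA_eq_update (n : ℕ) : zeroA n = Function.update (allA (n + 1)) 0 .z := by
  funext j
  by_cases h : j = 0 <;> simp [zeroA, allA, h]

lemma aOne_eq_update (n : ℕ) : aOne n = Function.update (allA (n + 1)) (Fin.last n) .o := by
  funext j
  simp [aOne, allA, Function.update_apply, Fin.ext_iff]

lemma aZero_eq_update (n : ℕ) : aZero n = Function.update (allA (n + 1)) (Fin.last n) .z := by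
  funext j
  simp [aZero, allA, Function.update_apply, Fin.ext_iff]

theorem statement7_general (X : SSet) (hX : IsDecomposition X) (n : ℕ) :
    (wordSet X (oneA n)
        = X.σ (0 : Fin (n + 1)) '' wordSet X (allA n) ∪ wordSet X (allA (n + 1)) ∧
      Disjoint (X.σ (0 : Fin (n + 1)) '' wordSet X (allA n)) (wordSet X (allA (n + 1))) ∧
      Set.BijOn (X.σ (0 : Fin (n + 1))) (wordSet X (allA n)) (wordSet X (zeroA n)) ∧
      (∀ τ ∈ wordSet X (allA n),
        X.map (longEdgeMap (n + 1)).op (X.σ (0 : Fin (n + 1)) τ)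
          = X.map (longEdgeMap n).op τ)) ∧
    (wordSet X (aOne n)
        = X.σ (Fin.last n) '' wordSet X (allA n) ∪ wordSet X (allA (n + 1)) ∧
      Disjoint (X.σ (Fin.last n) '' wordSet X (allA n)) (wordSet X (allA (n + 1))) ∧
      Set.BijOn (X.σ (Fin.last n)) (wordSet X (allA n)) (wordSet X (aZero n)) ∧
      (∀ τ ∈ wordSet X (allA n),
        X.map (longEdgeMap (n + 1)).op (X.σ (Fin.last n) τ)
          = X.map (longEdgeMap n).op τ)) := by
  rw [oneA_eq_update, zeroA_eq_update, aOne_eq_update, aZero_eq_update]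
  exact ⟨⟨hX.wordSet_update_one 0, disjoint_image_σ_wordSet_allA X 0, hX.bijOn_σ 0,
      fun τ _ => map_longEdgeMap_σ X 0 τ⟩,
    ⟨hX.wordSet_update_one (Fin.last n), disjoint_image_σ_wordSet_allA X (Fin.last n),
      hX.bijOn_σ (Fin.last n), fun τ _ => map_longEdgeMap_σ X (Fin.last n) τ⟩⟩

theorem statement7 (X : SSet) (hX : IsDecomposition X)
    (hc : Function.Injective (X.σ (0 : Fin 1) : X _⦋0⦌ ⟶ X _⦋1⦌)) (n : ℕ) :
    (wordSet X (oneA n)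
        = X.σ (0 : Fin (n + 1)) '' wordSet X (allA n) ∪ wordSet X (allA (n + 1)) ∧
      Disjoint (X.σ (0 : Fin (n + 1)) '' wordSet X (allA n)) (wordSet X (allA (n + 1))) ∧
      Set.BijOn (X.σ (0 : Fin (n + 1))) (wordSet X (allA n)) (wordSet X (zeroA n)) ∧
      (∀ τ ∈ wordSet X (allA n),
        X.map (longEdgeMap (n + 1)).op (X.σ (0 : Fin (n + 1)) τ)
          = X.map (longEdgeMap n).op τ)) ∧
    (wordSet X (aOne n)
        = X.σ (Fin.last n) '' wordSet X (allA n) ∪ wordSet X (allA (n + 1)) ∧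
      Disjoint (X.σ (Fin.last n) '' wordSet X (allA n)) (wordSet X (allA (n + 1))) ∧
      Set.BijOn (X.σ (Fin.last n)) (wordSet X (allA n)) (wordSet X (aZero n)) ∧
      (∀ τ ∈ wordSet X (allA n),
        X.map (longEdgeMap (n + 1)).op (X.σ (Fin.last n) τ)
          = X.map (longEdgeMap n).op τ)) :=
  statement7_general X hX n
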